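/- arXiv:2311.17032 — 2 statements merged into one kernel-verified Lean document; each statement's English description precedes it below -/
import Mathlib

section
/- For r ≥ 1 and integer n with n ∉ {0, 1, ..., r}, the Fourier coefficients of ρ_r(τ) = -(e^{iτ}-1)^{r-1} log(2|sin(τ/2)|) are given by ρ̂_r(n) = sign(n)/(2r) · binom(n, r)^{-1}, where binom(n,r) = n(n-1)⋯(n-r+1)/r!. -/
open Real

/-- The `n`-th Fourier coefficient `(1/2π)∫₀^{2π} g(τ) e^{-inτ} dτ`. -/
noncomputable def fcoef (g : ℝ → ℂ) (n : ℤ) : ℂ :=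
  (1 / (2 * π)) * ∫ τ in (0:ℝ)..(2 * π), g τ * Complex.exp (-Complex.I * n * τ)

/-- `ρ_r(τ) = -(e^{iτ}-1)^{r-1} log(2|sin(τ/2)|)`. -/
noncomputable def ρ (r : ℕ) : ℝ → ℂ :=
  fun τ => -(Complex.exp (Complex.I * τ) - 1) ^ (r - 1) *
    ((Real.log (2 * |Real.sin (τ / 2)|)) : ℝ)

/-- The generalized binomial coefficient `binom(n,r) = n(n-1)⋯(n-r+1)/r!` for integer `n`. -/
noncomputable def gbinom (n : ℤ) (r : ℕ) : ℂ :=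
  (∏ i ∈ Finset.range r, ((n : ℂ) - (i : ℂ))) / (Nat.factorial r : ℂ)

open MeasureTheory intervalIntegral Finset

lemma intint_log_zero (a : ℝ) (ha : 1 ≤ a) : IntervalIntegrable Real.log volume 0 a := by
  have hg : IntervalIntegrable (fun x : ℝ => 2 * x ^ (-(1:ℝ)/2) + Real.log a) volume 0 a :=
    ((intervalIntegrable_rpow' (by norm_num)).const_mul 2).add intervalIntegrable_const
  refine hg.mono_fun ?_ ?_
  · exact (measurable_log.aestronglyMeasurable).restrict
  · rw [Filter.EventuallyLE, ae_restrict_iff' measurableSet_uIoc]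
    refine Filter.Eventually.of_forall fun x hx => ?_
    rw [Set.uIoc_of_le (by linarith : (0:ℝ) ≤ a)] at hx
    obtain ⟨hx0, hxa⟩ := hx
    have hxpos : 0 < x := hx0
    have h1 : 0 ≤ Real.log a := Real.log_nonneg ha
    have h2 : (0:ℝ) ≤ 2 * x ^ (-(1:ℝ)/2) := by positivity
    rw [Real.norm_eq_abs, Real.norm_eq_abs]
    rw [abs_of_nonneg (by positivity : (0:ℝ) ≤ 2 * x ^ (-(1:ℝ)/2) + Real.log a)]
    rcases le_total x 1 with hx1 | hx1
    · have : Real.log (x ^ (-(1:ℝ)/2)) ≤ x ^ (-(1:ℝ)/2) - 1 :=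
        Real.log_le_sub_one_of_pos (by positivity)
      rw [Real.log_rpow hxpos] at this
      have hlx : Real.log x ≤ 0 := Real.log_nonpos hx0.le hx1
      rw [abs_of_nonpos hlx]
      nlinarith
    · have hlx : 0 ≤ Real.log x := Real.log_nonneg hx1
      rw [abs_of_nonneg hlx]
      have := Real.log_le_log (by linarith : (0:ℝ) < x) hxa
      linarith [Real.log_le_log hxpos hxa]

lemma sin_half_lower {τ : ℝ} (h0 : 0 < τ) (h2 : τ < 2 * π) :
    τ * (2 * π - τ) / (2 * π ^ 2) ≤ Real.sin (τ / 2) := by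
  have hπ := Real.pi_pos
  rcases le_total τ π with hτ | hτ
  · have h := Real.mul_le_sin (x := τ/2) (by linarith) (by linarith)
    have he : 2 / π * (τ / 2) * (2 * π ^ 2) = 2 * π * τ := by field_simp
    have : τ * (2 * π - τ) / (2 * π ^ 2) ≤ 2 / π * (τ / 2) := by
      rw [div_le_iff₀ (by positivity), he]; nlinarith
    linarith
  · have h := Real.mul_le_sin (x := π - τ/2) (by linarith) (by linarith)
    rw [Real.sin_pi_sub] at h
    have he : 2 / π * (π - τ / 2) * (2 * π ^ 2) = 4 * π ^ 2 - 2 * π * τ := by field_simp; ring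
    have : τ * (2 * π - τ) / (2 * π ^ 2) ≤ 2 / π * (π - τ / 2) := by
      rw [div_le_iff₀ (by positivity), he]; nlinarith [sq_nonneg (2 * π - τ)]
    linarith


lemma L_abs_bound {τ : ℝ} (h0 : 0 < τ) (h2 : τ < 2 * π) :
    |Real.log (2 * |Real.sin (τ / 2)|)| ≤
      Real.log 2 + 2 * Real.log π + |Real.log τ| + |Real.log (2 * π - τ)| := by
  have hπ := Real.pi_pos
  have h2π : (0:ℝ) < 2 * π - τ := by linarith
  have hs : 0 < Real.sin (τ / 2) :=
    Real.sin_pos_of_pos_of_lt_pi (by linarith) (by linarith)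
  rw [abs_of_pos hs]
  have hlog2 : (0:ℝ) ≤ Real.log 2 := Real.log_nonneg one_le_two
  have hlogπ : (0:ℝ) ≤ Real.log π := Real.log_nonneg (by linarith [Real.pi_gt_three])
  rw [abs_le]
  constructor
  · have hlb := sin_half_lower h0 h2
    have hpos : (0:ℝ) < τ * (2 * π - τ) / (2 * π ^ 2) :=
      div_pos (mul_pos h0 h2π) (by positivity)
    have h1 : Real.log (2 * (τ * (2 * π - τ) / (2 * π ^ 2))) ≤ Real.log (2 * Real.sin (τ / 2)) :=
      Real.log_le_log (by linarith) (by linarith)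
    have he : 2 * (τ * (2 * π - τ) / (2 * π ^ 2)) = τ * (2 * π - τ) / π ^ 2 := by
      field_simp
    rw [he] at h1
    have h3 : Real.log (τ * (2 * π - τ) / π ^ 2) =
        Real.log τ + Real.log (2 * π - τ) - 2 * Real.log π := by
      rw [Real.log_div (by positivity) (by positivity), Real.log_mul h0.ne' h2π.ne',
        Real.log_pow]
      push_cast; ring
    rw [h3] at h1
    have h4 : -|Real.log τ| ≤ Real.log τ := neg_abs_le _
    have h5 : -|Real.log (2 * π - τ)| ≤ Real.log (2 * π - τ) := neg_abs_le _
    linarith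
  · have hs1 : Real.sin (τ / 2) ≤ 1 := Real.sin_le_one _
    have : Real.log (2 * Real.sin (τ / 2)) ≤ Real.log 2 :=
      Real.log_le_log (by linarith) (by linarith)
    have h4 : 0 ≤ |Real.log τ| := abs_nonneg _
    have h5 : 0 ≤ |Real.log (2 * π - τ)| := abs_nonneg _
    linarith

lemma intint_L : IntervalIntegrable (fun τ => Real.log (2 * |Real.sin (τ / 2)|))
    volume 0 (2 * π) := by
  have hπ := Real.pi_pos
  have h1 : IntervalIntegrable Real.log volume 0 (2*π) :=
    intint_log_zero _ (by linarith [Real.pi_gt_three])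
  have h2 : IntervalIntegrable (fun x => Real.log (2*π - x)) volume 0 (2*π) := by
    have := (h1.comp_sub_left (2*π)).symm
    simpa using this
  have hg : IntervalIntegrable
      (fun x => Real.log 2 + 2 * Real.log π + |Real.log x| + |Real.log (2*π - x)|)
      volume 0 (2*π) := by
    apply IntervalIntegrable.add
    apply IntervalIntegrable.add intervalIntegrable_const
    · simpa [Real.norm_eq_abs] using h1.norm
    · simpa [Real.norm_eq_abs] using h2.norm
  refine hg.mono_fun ?_ ?_
  · exact (Real.measurable_log.comp (by fun_prop)).aestronglyMeasurable
  · rw [Filter.EventuallyLE, ae_restrict_iff' measurableSet_uIoc]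
    refine Filter.Eventually.of_forall fun x hx => ?_
    rw [Set.uIoc_of_le (by positivity : (0:ℝ) ≤ 2*π)] at hx
    obtain ⟨hx0, hx2⟩ := hx
    rw [Real.norm_eq_abs, Real.norm_eq_abs]
    have hlog2 : (0:ℝ) ≤ Real.log 2 := Real.log_nonneg one_le_two
    have hlogπ : (0:ℝ) ≤ Real.log π := Real.log_nonneg (by linarith [Real.pi_gt_three])
    rcases eq_or_lt_of_le hx2 with rfl | hlt
    · have hsin : Real.sin (2*π/2) = 0 := by
        rw [show (2*π/2 : ℝ) = π by ring, Real.sin_pi]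
      simp only [hsin, abs_zero, mul_zero, Real.log_zero, abs_zero]
      exact abs_nonneg _
    · have hb := L_abs_bound hx0 hlt
      exact hb.trans (le_abs_self _)

lemma key_identity (m : ℕ) (τ : ℝ) (hs : Real.sin (τ/2) ≠ 0) :
    ((Real.cos (τ/2) / (2 * Real.sin (τ/2)) : ℝ) : ℂ) *
      (Complex.exp (-Complex.I * m * τ) - 1) =
    -(Complex.I/2) * ((Complex.exp (Complex.I * τ) + 1) *
      Complex.exp (-Complex.I * m * τ) *
      ∑ k ∈ Finset.range m, Complex.exp (Complex.I * k * τ)) := by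
  set x : ℂ := (τ : ℂ) with hx
  set w : ℂ := Complex.exp (Complex.I * x / 2) with hwdef
  set z : ℂ := Complex.exp (Complex.I * x) with hzdef
  set E : ℂ := Complex.exp (-Complex.I * m * x) with hEdef
  have hw0 : w ≠ 0 := Complex.exp_ne_zero _
  have hz : z = w ^ 2 := by
    rw [hwdef, hzdef, sq, ← Complex.exp_add]; ring_nf
  have hs' : ((Real.sin (τ/2) : ℝ) : ℂ) ≠ 0 := Complex.ofReal_ne_zero.mpr hs
  have hcos : Complex.cos (x / 2) = (z + 1) / (2 * w) := by
    simp only [Complex.cos]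
    have e1 : x / 2 * Complex.I = Complex.I * x / 2 := by ring
    have e2 : -(x / 2) * Complex.I = -(Complex.I * x / 2) := by ring
    rw [e1, e2, Complex.exp_neg, ← hwdef]
    field_simp
    rw [hz]
  have hsin : Complex.sin (x / 2) = (z - 1) / (2 * Complex.I * w) := by
    simp only [Complex.sin]
    have e1 : x / 2 * Complex.I = Complex.I * x / 2 := by ring
    have e2 : -(x / 2) * Complex.I = -(Complex.I * x / 2) := by ring
    rw [e1, e2, Complex.exp_neg, ← hwdef]
    field_simp
    rw [hz]
    ring_nf
    rw [Complex.I_sq]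
    ring
  have hsx : Complex.sin (x / 2) ≠ 0 := by
    rw [hx]
    rw [show ((τ:ℂ) / 2) = ((τ/2 : ℝ) : ℂ) by push_cast; ring, ← Complex.ofReal_sin]
    exact hs'
  have hz1 : z - 1 ≠ 0 := by
    intro h
    apply hsx
    rw [hsin, h, zero_div]
  have hSz : (∑ k ∈ Finset.range m, Complex.exp (Complex.I * k * x)) =
      ∑ k ∈ Finset.range m, z ^ k := by
    refine Finset.sum_congr rfl fun k _ => ?_
    rw [hzdef, ← Complex.exp_nat_mul]
    ring_nf
  have hES : E * ((∑ k ∈ Finset.range m, z ^ k) * (z - 1)) = 1 - E := by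
    rw [geom_sum_mul, mul_sub, mul_one]
    have : E * z ^ m = 1 := by
      rw [hEdef, hzdef, ← Complex.exp_nat_mul, ← Complex.exp_add]
      ring_nf
      exact Complex.exp_zero
    rw [this]
  push_cast
  rw [← hx, show ((x : ℂ) / 2) = x / 2 from rfl]
  rw [hcos, hsin, hSz]
  clear_value w z E
  field_simp
  generalize hgen : (∑ k ∈ Finset.range m, z ^ k) = S at hES ⊢
  linear_combination (z + 1) * hES

lemma integral_exp_I_int (j : ℤ) :
    ∫ τ in (0:ℝ)..(2*π), Complex.exp (Complex.I * j * τ) =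
      if j = 0 then (2*π:ℂ) else 0 := by
  rcases eq_or_ne j 0 with rfl | hj
  · simp
  · rw [if_neg hj]
    have hc : (Complex.I * j : ℂ) ≠ 0 := by
      simp [Complex.I_ne_zero, Complex.ext_iff]
      exact_mod_cast hj
    have := integral_exp_mul_complex (a := 0) (b := 2*π) hc
    simp only [mul_assoc] at this ⊢
    rw [this]
    have h1 : Complex.exp (Complex.I * (j * (2*π:ℝ))) = 1 := by
      have := Complex.exp_int_mul_two_pi_mul_I j
      rw [← this]
      push_cast
      ring_nf
    rw [h1]
    simp


noncomputable def LL : ℝ → ℝ := fun τ => Real.log (2 * |Real.sin (τ / 2)|)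

lemma intint_LC : IntervalIntegrable (fun τ => (LL τ : ℂ)) volume 0 (2 * π) :=
  ⟨intint_L.1.ofReal, intint_L.2.ofReal⟩

lemma intint_LC_mul (f : ℝ → ℂ) (hf : Continuous f) :
    IntervalIntegrable (fun τ => (LL τ : ℂ) * f τ) volume 0 (2 * π) :=
  intint_LC.mul_continuousOn (hf.continuousOn)

lemma integral_L_exp_pos (m : ℕ) (hm : 1 ≤ m) :
    ∫ τ in (0:ℝ)..(2*π), (LL τ : ℂ) * Complex.exp (-Complex.I * m * τ)
      = -(π : ℂ) / m := by
  have hπ := Real.pi_pos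
  have hm0 : (m : ℂ) ≠ 0 := Nat.cast_ne_zero.mpr (by omega)
  set c : ℂ := -Complex.I * m with hcdef
  have hc : c ≠ 0 := by
    simp only [hcdef, neg_mul, neg_ne_zero]
    exact mul_ne_zero Complex.I_ne_zero hm0
  set F : ℝ → ℂ := fun τ => (Complex.exp (c * τ) - 1) / c with hFdef
  set P : ℝ → ℂ := fun τ => (-(Complex.I/2) * ((Complex.exp (Complex.I*τ) + 1) *
      Complex.exp (c*τ) * ∑ k ∈ Finset.range m, Complex.exp (Complex.I*k*τ))) / c with hPdef
  set H : ℝ → ℂ := fun τ => (LL τ : ℂ) * F τ with hHdef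
  -- derivative on the interior
  have hderiv : ∀ τ ∈ Set.Ioo (0:ℝ) (2*π), HasDerivAt H
      (P τ + (LL τ : ℂ) * Complex.exp (c * τ)) τ := by
    intro τ hτ
    obtain ⟨h0, h2⟩ := hτ
    have hsin : 0 < Real.sin (τ/2) :=
      Real.sin_pos_of_pos_of_lt_pi (by linarith) (by linarith)
    -- derivative of LL
    have hL1 : HasDerivAt (fun t : ℝ => 2 * Real.sin (t/2)) (Real.cos (τ/2)) τ := by
      have h := ((Real.hasDerivAt_sin (τ/2)).comp τ ((hasDerivAt_id τ).div_const 2)).const_mul 2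
      exact h.congr_deriv (by ring)
    have hL2 : HasDerivAt (fun t : ℝ => Real.log (2 * Real.sin (t/2)))
        (Real.cos (τ/2) / (2 * Real.sin (τ/2))) τ := by
      have h := (Real.hasDerivAt_log (by positivity : 2 * Real.sin (τ/2) ≠ 0)).comp τ hL1
      simpa [div_eq_mul_inv, mul_comm, Function.comp_def] using h
    have hL3 : HasDerivAt LL (Real.cos (τ/2) / (2 * Real.sin (τ/2))) τ := by
      refine hL2.congr_of_eventuallyEq ?_
      have hmem : Set.Ioo (0:ℝ) (2*π) ∈ nhds τ := Ioo_mem_nhds h0 h2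
      filter_upwards [hmem] with t ht
      have : 0 < Real.sin (t/2) :=
        Real.sin_pos_of_pos_of_lt_pi (by linarith [ht.1]) (by linarith [ht.2])
      simp [LL, abs_of_pos this]
    have hLC : HasDerivAt (fun t : ℝ => (LL t : ℂ))
        ((Real.cos (τ/2) / (2 * Real.sin (τ/2)) : ℝ) : ℂ) τ := hL3.ofReal_comp
    -- derivative of F
    have hF : HasDerivAt F (Complex.exp (c * τ)) τ := by
      have h1 : HasDerivAt (fun w : ℂ => Complex.exp (c * w)) (c * Complex.exp (c * τ)) (τ:ℂ) := by
        have := ((hasDerivAt_id (τ:ℂ)).const_mul c).cexp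
        simpa [mul_comm] using this
      have h2 := (h1.comp_ofReal).sub_const 1
      have h3 := h2.div_const c
      simpa [hFdef, mul_div_cancel_left₀ _ hc] using h3
    have hmul := hLC.mul hF
    have heq : ((Real.cos (τ/2) / (2 * Real.sin (τ/2)) : ℝ) : ℂ) * F τ
        + (LL τ : ℂ) * Complex.exp (c * τ)
        = P τ + (LL τ : ℂ) * Complex.exp (c * τ) := by
      have hk := key_identity m τ hsin.ne'
      simp only [hPdef, hFdef, hcdef]
      rw [mul_div_assoc']
      rw [hk]
    rw [← heq]
    exact hmul
  -- integrability of the derivative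
  have hPcont : Continuous P := by
    have hS : Continuous (fun τ:ℝ => ∑ k ∈ Finset.range m, Complex.exp (Complex.I*k*τ)) :=
      continuous_finset_sum _ fun k _ => Complex.continuous_exp.comp (by fun_prop)
    have h1 : Continuous (fun τ:ℝ => Complex.exp (Complex.I*τ) + 1) :=
      (Complex.continuous_exp.comp (by fun_prop)).add continuous_const
    have h2 : Continuous (fun τ:ℝ => Complex.exp (c*τ)) :=
      Complex.continuous_exp.comp (by fun_prop)
    exact (continuous_const.mul ((h1.mul h2).mul hS)).div_const c
  have hint : IntervalIntegrable (fun τ => P τ + (LL τ : ℂ) * Complex.exp (c * τ))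
      volume 0 (2*π) := by
    apply (hPcont.intervalIntegrable _ _).add
    exact intint_LC_mul _ (Complex.continuous_exp.comp (by fun_prop))
  -- limits at the endpoints
  have hbound : ∀ τ : ℝ, 0 < τ → τ < 2*π → ‖LL τ‖ ≤
      Real.log 2 + 2 * Real.log π + |Real.log τ| + |Real.log (2 * π - τ)| := by
    intro τ h0 h2
    exact L_abs_bound h0 h2
  have hFnorm0 : ∀ τ : ℝ, 0 ≤ τ → τ ≤ 1/(m:ℝ) → ‖F τ‖ ≤ 2 * τ := by
    intro τ h0 h1
    have hmr : (0:ℝ) < m := by exact_mod_cast Nat.pos_of_ne_zero (by omega)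
    have habsc : ‖c‖ = m := by
      rw [hcdef, norm_mul]
      simp [Complex.norm_natCast]
    have habsct : ‖c * τ‖ = m * τ := by
      rw [norm_mul, habsc, Complex.norm_real, Real.norm_eq_abs, abs_of_nonneg h0]
    have habs : ‖c * τ‖ ≤ 1 := by
      rw [habsct]
      calc (m:ℝ) * τ ≤ (m:ℝ) * (1/(m:ℝ)) := mul_le_mul_of_nonneg_left h1 (le_of_lt hmr)
        _ = 1 := by field_simp
    have h := Complex.norm_exp_sub_one_le habs
    rw [habsct] at h
    have hFn : ‖F τ‖ = ‖Complex.exp (c*τ) - 1‖ / (m:ℝ) := by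
      rw [hFdef]
      simp only [norm_div, habsc]
    rw [hFn, div_le_iff₀ hmr]
    calc ‖Complex.exp (c*τ) - 1‖ ≤ 2 * ((m:ℝ) * τ) := h
      _ = 2 * τ * m := by ring
  -- limit at 0
  have hA : (0:ℝ) ≤ Real.log 2 + 2 * Real.log π := by
    have h2 : (0:ℝ) ≤ Real.log 2 := Real.log_nonneg one_le_two
    have h3 : (0:ℝ) ≤ Real.log π := Real.log_nonneg (by linarith [Real.pi_gt_three])
    linarith
  have hmr : (0:ℝ) < m := by exact_mod_cast Nat.pos_of_ne_zero (by omega)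
  have hlim0 : Filter.Tendsto H (nhdsWithin 0 (Set.Ioi 0)) (nhds 0) := by
    apply squeeze_zero_norm' (a := fun τ => (Real.log 2 + 2 * Real.log π) * (2*τ)
      + 2 * (|Real.log τ| * τ) + |Real.log (2*π - τ)| * (2*τ))
    · have hε : (0:ℝ) < min (1/(m:ℝ)) (2*π) := lt_min (by positivity) (by linarith)
      filter_upwards [Ioo_mem_nhdsGT_of_mem (Set.mem_Ico.mpr ⟨le_refl (0:ℝ), hε⟩)] with τ hτ
      obtain ⟨h0, hτε⟩ := hτ
      have h2 : τ < 2*π := lt_of_lt_of_le hτε (min_le_right _ _)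
      have h1 : τ ≤ 1/(m:ℝ) := le_trans hτε.le (min_le_left _ _)
      have hLb := L_abs_bound h0 h2
      have hFb := hFnorm0 τ h0.le h1
      have : ‖H τ‖ = |LL τ| * ‖F τ‖ := by
        simp [hHdef, Complex.norm_real, abs_mul]
      rw [this]
      calc |LL τ| * ‖F τ‖
          ≤ (Real.log 2 + 2 * Real.log π + |Real.log τ| + |Real.log (2*π - τ)|) * (2*τ) := by
            apply mul_le_mul hLb hFb (norm_nonneg _)
            have := abs_nonneg (Real.log τ)
            have := abs_nonneg (Real.log (2*π - τ))
            linarith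
        _ = (Real.log 2 + 2 * Real.log π) * (2*τ) + 2 * (|Real.log τ| * τ)
              + |Real.log (2*π - τ)| * (2*τ) := by ring
    · have T1 : Filter.Tendsto (fun τ:ℝ => (Real.log 2 + 2 * Real.log π) * (2*τ))
          (nhdsWithin 0 (Set.Ioi 0)) (nhds 0) := by
        have : Filter.Tendsto (fun τ:ℝ => (Real.log 2 + 2 * Real.log π) * (2*τ))
            (nhds 0) (nhds ((Real.log 2 + 2 * Real.log π) * (2*0))) :=
          Continuous.tendsto (by fun_prop) _
        simpa using this.mono_left nhdsWithin_le_nhds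
      have T2 : Filter.Tendsto (fun τ:ℝ => 2 * (|Real.log τ| * τ))
          (nhdsWithin 0 (Set.Ioi 0)) (nhds 0) := by
        have h := (tendsto_log_mul_rpow_nhdsGT_zero zero_lt_one).abs
        simp only [Real.rpow_one, abs_zero] at h
        have h2 := h.const_mul 2
        rw [mul_zero] at h2
        apply h2.congr'
        filter_upwards [self_mem_nhdsWithin] with τ (hτ : τ ∈ Set.Ioi 0)
        rw [abs_mul, abs_of_pos (a := τ) hτ]
      have T3 : Filter.Tendsto (fun τ:ℝ => |Real.log (2*π - τ)| * (2*τ))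
          (nhdsWithin 0 (Set.Ioi 0)) (nhds 0) := by
        have hc2 : (2*π : ℝ) - 0 ≠ 0 := by simp
        have : Filter.Tendsto (fun τ:ℝ => |Real.log (2*π - τ)| * (2*τ))
            (nhds 0) (nhds (|Real.log (2*π - 0)| * (2*0))) := by
          apply Filter.Tendsto.mul
          · exact (((Real.continuousAt_log hc2).comp (by fun_prop)).abs).tendsto
          · exact Continuous.tendsto (by fun_prop) _
        simpa using this.mono_left nhdsWithin_le_nhds
      have := (T1.add T2).add T3
      simpa using this
  -- limit at 2π
  have hexp2π : Complex.exp (c * ((2*π:ℝ):ℂ)) = 1 := by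
    have := Complex.exp_int_mul_two_pi_mul_I (-(m:ℤ))
    rw [← this]
    congr 1
    rw [hcdef]; push_cast; ring
  have hFnorm2 : ∀ τ : ℝ, 0 ≤ 2*π - τ → 2*π - τ ≤ 1/(m:ℝ) → ‖F τ‖ ≤ 2 * (2*π - τ) := by
    intro τ h0 h1
    have hsplit : Complex.exp (c * τ) = Complex.exp (c * ((τ - 2*π : ℝ):ℂ)) := by
      rw [show (c * ((τ:ℝ):ℂ)) = c * ((τ - 2*π : ℝ):ℂ) + c * ((2*π:ℝ):ℂ) by push_cast; ring,
        Complex.exp_add, hexp2π, mul_one]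
    have habsct : ‖c * ((τ - 2*π : ℝ):ℂ)‖ = m * (2*π - τ) := by
      rw [norm_mul]
      have : ‖c‖ = m := by rw [hcdef, norm_mul]; simp [Complex.norm_natCast]
      rw [this, Complex.norm_real, Real.norm_eq_abs, abs_of_nonpos (by linarith)]
      ring
    have habs : ‖c * ((τ - 2*π : ℝ):ℂ)‖ ≤ 1 := by
      rw [habsct]
      calc (m:ℝ) * (2*π - τ) ≤ (m:ℝ) * (1/(m:ℝ)) := mul_le_mul_of_nonneg_left h1 hmr.le
        _ = 1 := by field_simp
    have h := Complex.norm_exp_sub_one_le habs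
    rw [habsct] at h
    have hFn : ‖F τ‖ = ‖Complex.exp (c*τ) - 1‖ / (m:ℝ) := by
      rw [hFdef]
      have : ‖c‖ = m := by rw [hcdef, norm_mul]; simp [Complex.norm_natCast]
      simp only [norm_div, this]
    rw [hFn, div_le_iff₀ hmr, hsplit]
    calc ‖Complex.exp (c * ((τ - 2*π : ℝ):ℂ)) - 1‖ ≤ 2 * ((m:ℝ) * (2*π - τ)) := h
      _ = 2 * (2*π - τ) * m := by ring
  have hlim2 : Filter.Tendsto H (nhdsWithin (2*π) (Set.Iio (2*π))) (nhds 0) := by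
    apply squeeze_zero_norm' (a := fun τ => (Real.log 2 + 2 * Real.log π) * (2*(2*π - τ))
      + |Real.log τ| * (2*(2*π - τ)) + 2 * (|Real.log (2*π - τ)| * (2*π - τ)))
    · have hδ : (2*π : ℝ) - min (1/(m:ℝ)) (2*π) < 2*π := by
        have : (0:ℝ) < min (1/(m:ℝ)) (2*π) := lt_min (by positivity) (by linarith)
        linarith
      filter_upwards [Ioo_mem_nhdsLT_of_mem
        (Set.mem_Ioc.mpr ⟨hδ, le_refl (2*π:ℝ)⟩)] with τ hτ
      obtain ⟨hτδ, h2⟩ := hτ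
      have h0 : 0 < τ := by
        have h1 := min_le_right (1/(m:ℝ)) (2*π)
        have := Real.pi_pos
        nlinarith [min_le_right (1/(m:ℝ)) (2*π), lt_min (show (0:ℝ) < 1/(m:ℝ) by positivity) (show (0:ℝ) < 2*π by linarith)]
      have h1 : 2*π - τ ≤ 1/(m:ℝ) := by
        have := min_le_left (1/(m:ℝ)) (2*π)
        linarith
      have hLb := L_abs_bound h0 h2
      have hFb := hFnorm2 τ (by linarith) h1
      have : ‖H τ‖ = |LL τ| * ‖F τ‖ := by
        simp [hHdef, Complex.norm_real, abs_mul]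
      rw [this]
      calc |LL τ| * ‖F τ‖
          ≤ (Real.log 2 + 2 * Real.log π + |Real.log τ| + |Real.log (2*π - τ)|)
              * (2*(2*π - τ)) := by
            apply mul_le_mul hLb hFb (norm_nonneg _)
            have := abs_nonneg (Real.log τ)
            have := abs_nonneg (Real.log (2*π - τ))
            linarith
        _ = (Real.log 2 + 2 * Real.log π) * (2*(2*π - τ))
              + |Real.log τ| * (2*(2*π - τ)) + 2 * (|Real.log (2*π - τ)| * (2*π - τ)) := by
            ring
    · have hsub : Filter.Tendsto (fun τ:ℝ => 2*π - τ) (nhdsWithin (2*π) (Set.Iio (2*π)))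
          (nhdsWithin 0 (Set.Ioi 0)) := by
        apply tendsto_nhdsWithin_of_tendsto_nhds_of_eventually_within
        · have : Filter.Tendsto (fun τ:ℝ => 2*π - τ) (nhds (2*π)) (nhds (2*π - 2*π)) :=
            Continuous.tendsto (by fun_prop) _
          simpa using this.mono_left nhdsWithin_le_nhds
        · filter_upwards [self_mem_nhdsWithin] with τ (hτ : τ ∈ Set.Iio (2*π))
          simp only [Set.mem_Ioi]
          simp only [Set.mem_Iio] at hτ
          linarith
      have T1 : Filter.Tendsto (fun τ:ℝ => (Real.log 2 + 2 * Real.log π) * (2*(2*π - τ)))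
          (nhdsWithin (2*π) (Set.Iio (2*π))) (nhds 0) := by
        have : Filter.Tendsto (fun τ:ℝ => (Real.log 2 + 2 * Real.log π) * (2*(2*π - τ)))
            (nhds (2*π)) (nhds ((Real.log 2 + 2 * Real.log π) * (2*(2*π - 2*π)))) :=
          Continuous.tendsto (by fun_prop) _
        simpa using this.mono_left nhdsWithin_le_nhds
      have T2 : Filter.Tendsto (fun τ:ℝ => |Real.log τ| * (2*(2*π - τ)))
          (nhdsWithin (2*π) (Set.Iio (2*π))) (nhds 0) := by
        have hc2 : (2*π : ℝ) ≠ 0 := by positivity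
        have : Filter.Tendsto (fun τ:ℝ => |Real.log τ| * (2*(2*π - τ)))
            (nhds (2*π)) (nhds (|Real.log (2*π)| * (2*(2*π - 2*π)))) := by
          apply Filter.Tendsto.mul
          · exact ((Real.continuousAt_log hc2).abs).tendsto
          · exact Continuous.tendsto (by fun_prop) _
        simpa using this.mono_left nhdsWithin_le_nhds
      have T3 : Filter.Tendsto (fun τ:ℝ => 2 * (|Real.log (2*π - τ)| * (2*π - τ)))
          (nhdsWithin (2*π) (Set.Iio (2*π))) (nhds 0) := by
        have h := (tendsto_log_mul_rpow_nhdsGT_zero zero_lt_one).abs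
        simp only [Real.rpow_one, abs_zero] at h
        have h2 : Filter.Tendsto (fun s:ℝ => 2 * (|Real.log s| * s))
            (nhdsWithin 0 (Set.Ioi 0)) (nhds 0) := by
          have h3 := (h.const_mul 2)
          rw [mul_zero] at h3
          apply h3.congr'
          filter_upwards [self_mem_nhdsWithin] with s (hs : s ∈ Set.Ioi 0)
          rw [abs_mul, abs_of_pos (a := s) hs]
        exact h2.comp hsub
      have := (T1.add T2).add T3
      simpa using this
  -- FTC
  have hFTC := intervalIntegral.integral_eq_sub_of_hasDerivAt_of_tendsto
    (by linarith : (0:ℝ) < 2*π) hderiv hint hlim0 hlim2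
  have hcexp : Continuous (fun τ:ℝ => Complex.exp (c * τ)) :=
    Complex.continuous_exp.comp (by fun_prop)
  have hLexpint : IntervalIntegrable (fun τ => (LL τ:ℂ) * Complex.exp (c * τ)) volume 0 (2*π) :=
    intint_LC_mul (fun τ => Complex.exp (c * (τ:ℝ))) hcexp
  rw [intervalIntegral.integral_add (hPcont.intervalIntegrable _ _) hLexpint] at hFTC
  rw [sub_zero] at hFTC
  -- compute the integral of P
  have hPsum : ∀ τ:ℝ, P τ = ∑ k ∈ Finset.range m, (-(Complex.I/2)/c) *
      (Complex.exp (Complex.I * ((((k:ℤ) + 1 - (m:ℤ)) : ℤ) : ℂ) * τ)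
        + Complex.exp (Complex.I * ((((k:ℤ) - (m:ℤ)) : ℤ) : ℂ) * τ)) := by
    intro τ
    simp only [hPdef]
    rw [Finset.mul_sum, Finset.mul_sum, Finset.sum_div]
    refine Finset.sum_congr rfl fun k hk => ?_
    have e1 : Complex.exp (Complex.I * ((((k:ℤ) + 1 - (m:ℤ)) : ℤ) : ℂ) * τ)
        = Complex.exp (Complex.I * τ) * (Complex.exp (c * τ) * Complex.exp (Complex.I * k * τ)) := by
      rw [← Complex.exp_add, ← Complex.exp_add]
      congr 1
      rw [hcdef]; push_cast; ring
    have e2 : Complex.exp (Complex.I * ((((k:ℤ) - (m:ℤ)) : ℤ) : ℂ) * τ)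
        = Complex.exp (c * τ) * Complex.exp (Complex.I * k * τ) := by
      rw [← Complex.exp_add]
      congr 1
      rw [hcdef]; push_cast; ring
    rw [e1, e2]
    ring
  have hintP : ∫ τ in (0:ℝ)..(2*π), P τ = (π:ℂ)/m := by
    rw [intervalIntegral.integral_congr (fun τ _ => hPsum τ)]
    rw [intervalIntegral.integral_finset_sum (fun k hk => by
      apply Continuous.intervalIntegrable
      exact continuous_const.mul ((Complex.continuous_exp.comp (by fun_prop)).add
        (Complex.continuous_exp.comp (by fun_prop))))]
    have hterm : ∀ k ∈ Finset.range m,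
        (∫ τ in (0:ℝ)..(2*π), (-(Complex.I/2)/c) *
          (Complex.exp (Complex.I * ((((k:ℤ) + 1 - (m:ℤ)) : ℤ) : ℂ) * τ)
            + Complex.exp (Complex.I * ((((k:ℤ) - (m:ℤ)) : ℤ) : ℂ) * τ)))
        = (-(Complex.I/2)/c) * ((if ((k:ℤ) + 1 - (m:ℤ)) = 0 then (2*π:ℂ) else 0)
            + (if ((k:ℤ) - (m:ℤ)) = 0 then (2*π:ℂ) else 0)) := by
      intro k hk
      have i1 : IntervalIntegrable
          (fun τ:ℝ => Complex.exp (Complex.I * ((((k:ℤ) + 1 - (m:ℤ)) : ℤ) : ℂ) * τ))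
          volume 0 (2*π) := by
        apply Continuous.intervalIntegrable
        exact Complex.continuous_exp.comp (by fun_prop)
      have i2 : IntervalIntegrable
          (fun τ:ℝ => Complex.exp (Complex.I * ((((k:ℤ) - (m:ℤ)) : ℤ) : ℂ) * τ))
          volume 0 (2*π) := by
        apply Continuous.intervalIntegrable
        exact Complex.continuous_exp.comp (by fun_prop)
      rw [intervalIntegral.integral_const_mul, intervalIntegral.integral_add i1 i2,
        integral_exp_I_int, integral_exp_I_int]
    rw [Finset.sum_congr rfl hterm]
    rw [Finset.sum_eq_single (m-1)]
    · rw [if_pos (by omega), if_neg (by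
        have : (m-1 : ℕ) < m := by omega
        omega)]
      rw [hcdef]
      field_simp
      ring
    · intro k hk hne
      have hkm : k < m := Finset.mem_range.mp hk
      rw [if_neg (by omega), if_neg (by omega)]
      simp
    · intro h
      exact absurd (Finset.mem_range.mpr (by omega)) h
  rw [hintP] at hFTC
  linear_combination hFTC


lemma intervalIntegral_conj {f : ℝ → ℂ} {a b : ℝ} :
    ∫ x in a..b, (starRingEnd ℂ) (f x) = (starRingEnd ℂ) (∫ x in a..b, f x) := by
  simp only [intervalIntegral]
  rw [map_sub, ← integral_conj, ← integral_conj]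

lemma integral_L_exp (n : ℤ) (hn : n ≠ 0) :
    ∫ τ in (0:ℝ)..(2*π), (LL τ : ℂ) * Complex.exp (-Complex.I * (n:ℂ) * τ)
      = -((Int.sign n : ℤ) : ℂ) * π / n := by
  rcases lt_or_gt_of_ne hn with hneg | hpos
  · set m : ℕ := (-n).toNat with hmdef
    have hm : 1 ≤ m := by omega
    have h1 : (m:ℤ) = -n := Int.toNat_of_nonneg (by omega)
    have hmn : ((m:ℕ) : ℂ) = -(n:ℂ) := by exact_mod_cast congrArg (fun z : ℤ => (z:ℂ)) h1
    have hn0 : (n:ℂ) ≠ 0 := Int.cast_ne_zero.mpr hn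
    have h := integral_L_exp_pos m hm
    have hconj : ∀ τ : ℝ, (LL τ : ℂ) * Complex.exp (-Complex.I * (n:ℂ) * τ)
        = (starRingEnd ℂ) ((LL τ : ℂ) * Complex.exp (-Complex.I * (m:ℂ) * τ)) := by
      intro τ
      rw [map_mul, Complex.conj_ofReal, ← Complex.exp_conj]
      congr 2
      simp only [map_mul, map_neg, Complex.conj_I, Complex.conj_ofReal]
      rw [Complex.conj_natCast]
      have : (n:ℂ) = -((m:ℕ):ℂ) := by rw [hmn]; ring
      rw [this]; ring
    calc ∫ τ in (0:ℝ)..(2*π), (LL τ : ℂ) * Complex.exp (-Complex.I * (n:ℂ) * τ)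
        = ∫ τ in (0:ℝ)..(2*π), (starRingEnd ℂ)
            ((LL τ : ℂ) * Complex.exp (-Complex.I * (m:ℂ) * τ)) := by
          exact intervalIntegral.integral_congr fun τ _ => hconj τ
      _ = (starRingEnd ℂ) (∫ τ in (0:ℝ)..(2*π),
            (LL τ : ℂ) * Complex.exp (-Complex.I * (m:ℂ) * τ)) := _root_.intervalIntegral_conj
      _ = (starRingEnd ℂ) (-(π:ℂ)/m) := by rw [h]
      _ = -((Int.sign n : ℤ) : ℂ) * π / n := by
          rw [Int.sign_eq_neg_one_of_neg hneg]
          rw [map_div₀, map_neg, Complex.conj_ofReal, Complex.conj_natCast, hmn]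
          push_cast
          field_simp
  · set m : ℕ := n.toNat with hmdef
    have hm : 1 ≤ m := by omega
    have hmn : ((m:ℕ) : ℂ) = (n:ℂ) := by
      have : (m : ℤ) = n := Int.toNat_of_nonneg (by omega)
      exact_mod_cast congrArg (fun z : ℤ => (z:ℂ)) this
    have h := integral_L_exp_pos m hm
    rw [hmn] at h
    rw [h, Int.sign_eq_one_of_pos hpos]
    push_cast
    ring

lemma intint_rho_mul (r : ℕ) (k : ℤ) :
    IntervalIntegrable (fun τ => ρ r τ * Complex.exp (-Complex.I * (k:ℂ) * τ))
      volume 0 (2*π) := by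
  have hfe : (fun τ => ρ r τ * Complex.exp (-Complex.I * (k:ℂ) * τ))
      = fun τ => (LL τ : ℂ) * (-(Complex.exp (Complex.I * τ) - 1) ^ (r-1)
          * Complex.exp (-Complex.I * (k:ℂ) * τ)) := by
    funext τ
    simp only [ρ, LL]
    ring
  rw [hfe]
  apply intint_LC_mul
  apply Continuous.mul
  · exact (((Complex.continuous_exp.comp (by fun_prop)).sub continuous_const).pow _).neg
  · exact Complex.continuous_exp.comp (by fun_prop)

lemma fcoef_rec (r : ℕ) (hr : 1 ≤ r) (n : ℤ) :
    fcoef (ρ (r+1)) n = fcoef (ρ r) (n-1) - fcoef (ρ r) n := by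
  unfold fcoef
  rw [← mul_sub, ← intervalIntegral.integral_sub (intint_rho_mul r (n-1)) (intint_rho_mul r n)]
  congr 1
  apply intervalIntegral.integral_congr
  intro τ _
  simp only [ρ]
  have hpow : (Complex.exp (Complex.I * τ) - 1) ^ r
      = (Complex.exp (Complex.I * τ) - 1) ^ (r-1) * (Complex.exp (Complex.I * τ) - 1) := by
    rw [← pow_succ]
    congr 1
    omega
  have hexp : Complex.exp (-Complex.I * ((n-1:ℤ):ℂ) * τ)
      = Complex.exp (Complex.I * τ) * Complex.exp (-Complex.I * (n:ℂ) * τ) := by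
    rw [← Complex.exp_add]
    congr 1
    push_cast
    ring
  push_cast
  push_cast at hexp
  rw [hpow, hexp]
  ring

/-- For `r ≥ 1` and `n ∉ {0,1,…,r}`, `ρ̂_r(n) = sign(n)/(2r) · binom(n,r)⁻¹`. -/
theorem fourier_coeff_rho_formula (r : ℕ) (hr : 1 ≤ r) (n : ℤ)
    (hn : ¬ (0 ≤ n ∧ n ≤ (r : ℤ))) :
    fcoef (ρ r) n = ((Int.sign n : ℤ) : ℂ) / (2 * (r : ℂ)) * (gbinom n r)⁻¹ := by
  induction r, hr using Nat.le_induction generalizing n with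
  | base =>
    have hn0 : n ≠ 0 := by
      intro h
      exact hn ⟨by omega, by omega⟩
    have hn0' : (n:ℂ) ≠ 0 := Int.cast_ne_zero.mpr hn0
    unfold fcoef
    have hrw : ∀ τ:ℝ, ρ 1 τ * Complex.exp (-Complex.I * n * τ)
        = -((LL τ:ℂ) * Complex.exp (-Complex.I * (n:ℂ) * τ)) := by
      intro τ
      simp only [ρ, LL]
      norm_num
    rw [intervalIntegral.integral_congr (fun τ _ => hrw τ),
      intervalIntegral.integral_neg, integral_L_exp n hn0]
    have hgb : gbinom n 1 = (n:ℂ) := by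
      simp [gbinom]
    rw [hgb]
    have hπ0 : ((π:ℝ):ℂ) ≠ 0 := Complex.ofReal_ne_zero.mpr Real.pi_ne_zero
    push_cast
    field_simp
  | succ r hr IH =>
    have hcase : n < 0 ∨ (r:ℤ) + 1 < n := by
      push_cast at hn
      omega
    have hnA : ¬ (0 ≤ n - 1 ∧ n - 1 ≤ (r : ℤ)) := by omega
    have hnB : ¬ (0 ≤ n ∧ n ≤ (r : ℤ)) := by omega
    rw [fcoef_rec r hr n, IH (n-1) hnA, IH n hnB]
    have hsign : Int.sign (n-1) = Int.sign n := by
      rcases hcase with h | h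
      · rw [Int.sign_eq_neg_one_of_neg (by omega), Int.sign_eq_neg_one_of_neg (by omega)]
      · rw [Int.sign_eq_one_of_pos (by omega), Int.sign_eq_one_of_pos (by omega)]
    rw [hsign]
    -- algebraic identity
    set A : ℂ := ∏ i ∈ Finset.range r, ((n : ℂ) - (i : ℂ)) with hAdef
    set B : ℂ := ∏ i ∈ Finset.range r, (((n-1 : ℤ) : ℂ) - (i : ℂ)) with hBdef
    have hCA : gbinom n (r+1) = A * ((n:ℂ) - r) / ((r+1).factorial : ℂ) := by
      rw [gbinom, Finset.prod_range_succ]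
    have hAB : A * ((n:ℂ) - r) = (n:ℂ) * B := by
      have h1 : (∏ i ∈ Finset.range (r+1), ((n : ℂ) - (i : ℂ)))
          = (∏ i ∈ Finset.range r, ((n : ℂ) - ((i+1 : ℕ) : ℂ))) * ((n:ℂ) - (0:ℕ)) :=
        Finset.prod_range_succ' _ _
      have h2 : (∏ i ∈ Finset.range (r+1), ((n : ℂ) - (i : ℂ))) = A * ((n:ℂ) - r) :=
        Finset.prod_range_succ _ _
      have h3 : (∏ i ∈ Finset.range r, ((n : ℂ) - ((i+1 : ℕ) : ℂ))) = B := by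
        refine Finset.prod_congr rfl fun i _ => ?_
        push_cast
        ring
      rw [h2, h3] at h1
      rw [h1]
      push_cast
      ring
    have hfac : (0:ℂ) ≠ (r.factorial : ℂ) := by
      exact_mod_cast (Nat.cast_ne_zero.mpr r.factorial_ne_zero).symm
    have hne : ∀ i : ℕ, (i:ℤ) ≤ (r:ℤ) + 1 → (n:ℂ) - i ≠ 0 := by
      intro i hi
      rw [show ((n:ℂ) - i) = (((n - i : ℤ)):ℂ) by push_cast; ring]
      exact Int.cast_ne_zero.mpr (by omega)
    have hA0 : A ≠ 0 := by
      rw [hAdef]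
      exact Finset.prod_ne_zero_iff.mpr fun i hi =>
        hne i (by have := Finset.mem_range.mp hi; push_cast; omega)
    have hB0 : B ≠ 0 := by
      rw [hBdef]
      refine Finset.prod_ne_zero_iff.mpr fun i hi => ?_
      rw [show (((n-1:ℤ):ℂ) - i) = (((n - (i+1) : ℤ)):ℂ) by push_cast; ring]
      have := Finset.mem_range.mp hi
      exact Int.cast_ne_zero.mpr (by omega)
    have hn0 : (n:ℂ) ≠ 0 := by
      rw [show ((n:ℂ)) = (((n:ℤ)):ℂ) from rfl]
      exact Int.cast_ne_zero.mpr (by omega)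
    have hnr : (n:ℂ) - r ≠ 0 := hne r (by omega)
    have hr0 : ((r:ℂ)) ≠ 0 := Nat.cast_ne_zero.mpr (by omega)
    have hr10 : ((r:ℂ)) + 1 ≠ 0 := by
      rw [show ((r:ℂ) + 1) = (((r+1:ℕ)):ℂ) by push_cast; ring]
      exact Nat.cast_ne_zero.mpr (by omega)
    have hs0 : ((Int.sign n : ℤ) : ℂ) ≠ 0 := by
      rcases hcase with h | h
      · rw [Int.sign_eq_neg_one_of_neg (by omega)]
        norm_num
      · rw [Int.sign_eq_one_of_pos (by omega)]
        norm_num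
    rw [hCA, gbinom, gbinom, ← hAdef, ← hBdef]
    rw [Nat.factorial_succ]
    push_cast
    field_simp
    linear_combination hAB
end

section
/- Let a : ℝ → ℂ be smooth, 2π-periodic and nowhere zero. Define the commutator-type kernel r_a(t,τ) := (a(t)-a(τ))/(a(t)(e^{i(t-τ)}-1)) for t-τ ∉ 2πℤ and r_a(t,τ) := -i a'(t)/a(t) for t-τ ∈ 2πℤ. Then r_a is a smooth bi-periodic function on ℝ². -/
open Real

set_option synthInstance.maxHeartbeats 1000000 in
theorem contDiff_param_int (n : ℕ) :
    ∀ (E : Type) (_ : NormedAddCommGroup E) (_ : NormedSpace ℝ E) (_ : CompleteSpace E)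
      (G : (ℝ × ℝ) × ℝ → E) (_ : ContDiff ℝ (⊤ : ℕ∞) G),
      ContDiff ℝ (n : ℕ∞) (fun p : ℝ × ℝ => ∫ u in (0:ℝ)..1, G (p, u)) := by
  induction n with
  | zero =>
    intro E _ _ _ G hG
    rw [show ((((0:ℕ):ℕ∞)) : WithTop ℕ∞) = 0 from rfl, contDiff_zero]
    exact intervalIntegral.continuous_parametric_intervalIntegral_of_continuous'
      (f := fun p u => G (p, u)) (μ := MeasureTheory.volume) hG.continuous 0 1
  | succ n ih =>
    intro E _ _ _ G hG
    set H : (ℝ × ℝ) × ℝ → (ℝ × ℝ) →L[ℝ] E := fun x =>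
      fderiv ℝ (fun q => G (q, x.2)) x.1 with hHdef
    have hH : ContDiff ℝ (⊤ : ℕ∞) H := by
      apply ContDiff.fderiv (f := fun (x : (ℝ × ℝ) × ℝ) (q : ℝ × ℝ) => G (q, x.2))
        (g := fun x => x.1) (m := (⊤ : ℕ∞)) (n := (⊤ : ℕ∞))
      · exact hG.comp (contDiff_snd.prodMk (contDiff_snd.comp contDiff_fst))
      · exact contDiff_fst
      · norm_cast
    have key : ∀ p : ℝ × ℝ, HasFDerivAt (fun q : ℝ × ℝ => ∫ u in (0:ℝ)..1, G (q, u))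
        (∫ u in (0:ℝ)..1, H (p, u)) p := by
      intro p
      obtain ⟨C, hC⟩ : ∃ C, ∀ x ∈ Metric.closedBall p 1 ×ˢ Set.uIcc (0:ℝ) 1, ‖H x‖ ≤ C := by
        have : IsCompact (Metric.closedBall p 1 ×ˢ Set.uIcc (0:ℝ) 1) :=
          (isCompact_closedBall _ _).prod isCompact_uIcc
        obtain ⟨C, hC⟩ := this.exists_bound_of_continuousOn hH.continuous.continuousOn
        exact ⟨C, hC⟩
      apply intervalIntegral.hasFDerivAt_integral_of_dominated_of_fderiv_le
        (F' := fun q u => H (q, u)) (bound := fun _ => C) (Metric.ball_mem_nhds p one_pos)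
      · filter_upwards with x
        exact (hG.continuous.comp (Continuous.prodMk_right x)).aestronglyMeasurable
      · exact (hG.continuous.comp (Continuous.prodMk_right p)).intervalIntegrable 0 1
      · exact (hH.continuous.comp (Continuous.prodMk_right p)).aestronglyMeasurable
      · filter_upwards with u hu x hx
        exact hC (x, u) ⟨Metric.ball_subset_closedBall hx, Set.uIoc_subset_uIcc hu⟩
      · exact intervalIntegrable_const
      · filter_upwards with u hu x hx
        exact ((hG.differentiable (by simp)).differentiableAt.comp x
          (differentiableAt_id.prodMk (differentiableAt_const u))).hasFDerivAt
    have hdiff : Differentiable ℝ (fun p : ℝ × ℝ => ∫ u in (0:ℝ)..1, G (p, u)) :=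
      fun p => (key p).differentiableAt
    have hfd : (fderiv ℝ (fun p : ℝ × ℝ => ∫ u in (0:ℝ)..1, G (p, u))) =
        fun p => ∫ u in (0:ℝ)..1, H (p, u) := funext fun p => (key p).fderiv
    have : ((((n : ℕ)+1 : ℕ) : ℕ∞) : WithTop ℕ∞) = ((n : ℕ∞) : WithTop ℕ∞) + 1 := by
      push_cast; rfl
    rw [this, contDiff_succ_iff_fderiv]
    refine ⟨hdiff, by simp, ?_⟩
    rw [hfd]
    exact ih _ _ _ inferInstance H hH

theorem contDiff_param_int' {E : Type} [NormedAddCommGroup E] [NormedSpace ℝ E] [CompleteSpace E]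
    (G : (ℝ × ℝ) × ℝ → E) (hG : ContDiff ℝ (⊤ : ℕ∞) G) :
    ContDiff ℝ (⊤ : ℕ∞) (fun p : ℝ × ℝ => ∫ u in (0:ℝ)..1, G (p, u)) := by
  exact contDiff_infty.mpr fun n => contDiff_param_int n _ _ _ inferInstance G hG

noncomputable def Ef : ℂ → ℂ := dslope Complex.exp 0

lemma Ef_zero : Ef 0 = 1 := by
  simp [Ef, dslope, Complex.deriv_exp]

lemma Ef_apply {z : ℂ} (hz : z ≠ 0) : Ef z = (Complex.exp z - 1) / z := by
  simp [Ef, dslope_of_ne _ hz, slope, hz, div_eq_inv_mul]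

lemma mul_Ef (z : ℂ) : z * Ef z = Complex.exp z - 1 := by
  rcases eq_or_ne z 0 with h | h
  · simp [h]
  · rw [Ef_apply h]; field_simp

lemma Ef_contDiff : ContDiff ℝ (⊤ : ℕ∞) Ef := by
  have hdiff : Differentiable ℂ Ef := by
    intro z
    rcases eq_or_ne z 0 with h | h
    · subst h
      have h1 : AnalyticAt ℂ Complex.exp 0 :=
        Complex.differentiable_exp.analyticAt 0
      obtain ⟨p, hp⟩ := h1
      exact (hp.has_fpower_series_dslope_fslope).analyticAt.differentiableAt
    · have : (fun w => (Complex.exp w - 1) / w) =ᶠ[nhds z] Ef := by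
        filter_upwards [isOpen_ne.mem_nhds h] with w hw
        exact (Ef_apply hw).symm
      refine DifferentiableAt.congr_of_eventuallyEq ?_ (Filter.EventuallyEq.symm this)
      exact ((Complex.differentiable_exp.differentiableAt.sub_const 1).div
        differentiableAt_id h)
  exact (hdiff.contDiff (n := (⊤ : ℕ∞))).restrict_scalars ℝ

lemma Ef_ne_zero {s : ℝ} (hs : |s| < 2 * π) : Ef (Complex.I * s) ≠ 0 := by
  rcases eq_or_ne s 0 with h | h
  · simp [h, Ef_zero]
  · have hz : (Complex.I * s) ≠ 0 := by
      simp [Complex.ext_iff, h]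
    rw [Ef_apply hz]
    refine div_ne_zero ?_ hz
    rw [sub_ne_zero]
    intro hexp
    rw [Complex.exp_eq_one_iff] at hexp
    obtain ⟨k, hk⟩ := hexp
    have hs' : (s : ℂ) = (k : ℂ) * (2 * π) := by
      apply mul_left_cancel₀ Complex.I_ne_zero
      rw [hk]; ring
    have hs'' : s = (k : ℝ) * (2 * π) := by exact_mod_cast hs'
    rcases eq_or_ne k 0 with hk0 | hk0
    · exact h (by simp [hs'', hk0])
    · have : (2 * π) ≤ |s| := by
        rw [hs'', abs_mul, abs_of_pos (by positivity : (0:ℝ) < 2 * π)]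
        have h1 : (1:ℝ) ≤ |(k:ℝ)| := by
          rw [← Int.cast_abs]
          exact_mod_cast Int.one_le_abs hk0
        nlinarith [pi_pos]
      linarith

noncomputable def Sl (a : ℝ → ℂ) : ℝ × ℝ → ℂ :=
  fun p => ∫ u in (0:ℝ)..1, deriv a (p.2 + u * (p.1 - p.2))

section
variable {a : ℝ → ℂ} (ha : ContDiff ℝ (⊤ : ℕ∞) a)
include ha

lemma Sl_contDiff : ContDiff ℝ (⊤ : ℕ∞) (Sl a) := by
  have hda : ContDiff ℝ (⊤ : ℕ∞) (deriv a) := by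
    have := (contDiff_infty_iff_deriv.mp (by exact_mod_cast ha)).2
    exact_mod_cast this
  apply contDiff_param_int' (G := fun x : (ℝ × ℝ) × ℝ => deriv a (x.1.2 + x.2 * (x.1.1 - x.1.2)))
  apply hda.comp
  fun_prop

lemma Sl_slope (t τ : ℝ) : (t - τ) • Sl a (t, τ) = a t - a τ := by
  have key : ∀ u : ℝ, HasDerivAt (fun u : ℝ => a (τ + u * (t - τ)))
      ((t - τ) • deriv a (τ + u * (t - τ))) u := by
    intro u
    have hg : HasDerivAt (fun u : ℝ => τ + u * (t - τ)) (t - τ) u := by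
      simpa using ((hasDerivAt_id u).mul_const (t - τ)).const_add τ
    have hf : HasDerivAt a (deriv a (τ + u * (t - τ))) (τ + u * (t - τ)) :=
      ((ha.differentiable (by simp)) _).hasDerivAt
    exact hf.scomp u hg
  have hint : IntervalIntegrable (fun u : ℝ => (t - τ) • deriv a (τ + u * (t - τ)))
      MeasureTheory.volume 0 1 := by
    apply Continuous.intervalIntegrable
    have hda : Continuous (deriv a) :=
      ((contDiff_infty_iff_deriv.mp (by exact_mod_cast ha)).2).continuous
    fun_prop
  have := intervalIntegral.integral_eq_sub_of_hasDerivAt (fun u _ => key u) hint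
  rw [intervalIntegral.integral_smul] at this
  simpa [Sl] using this

omit ha in
lemma Sl_diag (t : ℝ) : Sl a (t, t) = deriv a t := by
  simp [Sl]
end

/-- Let `a` be smooth, 2π-periodic and nowhere vanishing, and let `r_a` be the kernel
`r_a(t,τ) = (a(t)-a(τ))/(a(t)(e^{i(t-τ)}-1))` off the set `{t-τ ∈ 2πℤ}`, and
`r_a(t,τ) = -i a'(t)/a(t)` on it. Then `r_a` is a smooth bi-periodic function on `ℝ²`. -/
theorem ra_smooth_biperiodic (a : ℝ → ℂ) (ha : ContDiff ℝ (⊤ : ℕ∞) a)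
    (haper : ∀ t, a (t + 2 * π) = a t) (hnz : ∀ t, a t ≠ 0)
    (ra : ℝ → ℝ → ℂ)
    (hoff : ∀ t τ : ℝ, ¬ (∃ k : ℤ, t - τ = 2 * π * k) →
      ra t τ = (a t - a τ) / (a t * (Complex.exp (Complex.I * ((t : ℂ) - (τ : ℂ))) - 1)))
    (hdiag : ∀ t τ : ℝ, (∃ k : ℤ, t - τ = 2 * π * k) →
      ra t τ = -Complex.I * deriv a t / a t) :
    ContDiff ℝ (⊤ : ℕ∞) (fun p : ℝ × ℝ => ra p.1 p.2) ∧
    (∀ t τ : ℝ, ra (t + 2 * π) τ = ra t τ ∧ ra t (τ + 2 * π) = ra t τ) := by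
  have hper : Function.Periodic a (2 * π) := haper
  have hperk : ∀ (k : ℤ) (x : ℝ), a (x + 2 * π * k) = a x := by
    intro k x
    have := (hper.int_mul k) x
    rwa [show (k : ℝ) * (2 * π) = 2 * π * k by ring] at this
  have hdper : ∀ t, deriv a (t + 2 * π) = deriv a t := by
    intro t
    have h1 : deriv (fun s => a (s + 2 * π)) t = deriv a (t + 2 * π) :=
      deriv_comp_add_const a (2 * π) t
    rw [show (fun s => a (s + 2 * π)) = a from funext haper] at h1
    exact h1.symm
  -- the key local identity
  have main : ∀ (k : ℤ) (t τ : ℝ), |t - τ - 2 * π * k| < 2 * π →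
      ra t τ = Sl a (t, τ + 2 * π * k) *
        (Complex.I * a t * Ef (Complex.I * ((t:ℂ) - τ - 2 * π * k)))⁻¹ := by
    intro k t τ hW
    by_cases hex : ∃ m : ℤ, t - τ = 2 * π * m
    · obtain ⟨m, hm⟩ := hex
      have hmk : m = k := by
        have heq : t - τ - 2 * π * k = 2 * π * ((m:ℝ) - (k:ℝ)) := by rw [hm]; ring
        rw [heq, abs_mul, abs_of_pos (by positivity : (0:ℝ) < 2*π)] at hW
        have h5 : |(m:ℝ) - (k:ℝ)| < 1 := by nlinarith [pi_pos]
        have h6 : |m - k| < 1 := by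
          have : |((m - k : ℤ) : ℝ)| < 1 := by
            rwa [show ((m - k : ℤ) : ℝ) = (m:ℝ) - (k:ℝ) by push_cast; ring]
          exact_mod_cast this
        rw [abs_lt] at h6
        omega
      subst hmk
      have ht : τ + 2 * π * m = t := by linarith [hm]
      rw [hdiag t τ ⟨m, hm⟩, ht, Sl_diag, show (t:ℂ) - τ - 2*π*m = 0 by
        have : (t:ℝ) - τ - 2*π*m = 0 := by linarith [hm]
        exact_mod_cast congrArg (Complex.ofReal) this, mul_zero, Ef_zero, mul_one,
        mul_inv, Complex.inv_I]
      field_simp [hnz t]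
    · -- off-diagonal case
      set s : ℝ := t - τ - 2 * π * k with hs
      have hs0 : s ≠ 0 := by
        intro h0
        exact hex ⟨k, by linarith [hs ▸ h0]⟩
      have hsc : ((s:ℝ) : ℂ) = (t:ℂ) - τ - 2*π*k := by push_cast [hs]; ring
      have hsc0 : ((s:ℝ):ℂ) ≠ 0 := by exact_mod_cast hs0
      have haτ : a τ = a (τ + 2 * π * k) := (hperk k τ).symm
      have hslope : ((t - (τ + 2*π*k) : ℝ)) • Sl a (t, τ + 2*π*k) = a t - a (τ + 2*π*k) :=
        Sl_slope ha t (τ + 2*π*k)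
      have hexp : Complex.exp (Complex.I * ((t:ℂ) - τ)) =
          Complex.exp (Complex.I * ((s:ℝ):ℂ)) := by
        rw [show Complex.I * ((t:ℂ) - τ) = Complex.I * ((s:ℝ):ℂ) + k * (2*π*Complex.I) by
          rw [hsc]; ring, Complex.exp_add, Complex.exp_int_mul_two_pi_mul_I, mul_one]
      have hEf := mul_Ef (Complex.I * ((s:ℝ):ℂ))
      have hEfne : Ef (Complex.I * ((s:ℝ):ℂ)) ≠ 0 := Ef_ne_zero hW
      rw [hoff t τ hex, hexp, ← hEf]
      have hts : (t - (τ + 2*π*k) : ℝ) = s := by rw [hs]; ring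
      rw [hts] at hslope
      have hnum : a t - a τ = ((s:ℝ):ℂ) * Sl a (t, τ + 2*π*k) := by
        rw [haτ, ← hslope, Complex.real_smul]
      rw [hnum, ← hsc]
      field_simp [hnz t, Complex.I_ne_zero, hEfne]
  constructor
  · rw [contDiff_iff_contDiffAt]
    intro p
    obtain ⟨t₀, τ₀⟩ := p
    set k : ℤ := round ((t₀ - τ₀) / (2 * π)) with hk
    have hWp : |t₀ - τ₀ - 2 * π * k| < 2 * π := by
      have h1 : |(t₀ - τ₀) / (2 * π) - k| ≤ 1/2 := abs_sub_round _
      have h2 : (0:ℝ) < 2 * π := by positivity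
      have heq : t₀ - τ₀ - 2 * π * k = 2 * π * ((t₀ - τ₀) / (2 * π) - k) := by
        field_simp
      rw [heq, abs_mul, abs_of_pos h2]
      nlinarith [pi_pos, abs_nonneg ((t₀ - τ₀) / (2 * π) - (k:ℝ))]
    have hW_open : IsOpen {p : ℝ × ℝ | |p.1 - p.2 - 2 * π * k| < 2 * π} := by
      have : Continuous fun p : ℝ × ℝ => |p.1 - p.2 - 2 * π * k| := by fun_prop
      exact isOpen_lt this continuous_const
    have hmem : {p : ℝ × ℝ | |p.1 - p.2 - 2 * π * k| < 2 * π} ∈ nhds (t₀, τ₀) :=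
      hW_open.mem_nhds hWp
    have hF : ContDiffAt ℝ (⊤ : ℕ∞) (fun p : ℝ × ℝ => Sl a (p.1, p.2 + 2 * π * k) *
        (Complex.I * a p.1 * Ef (Complex.I * ((p.1:ℂ) - p.2 - 2 * π * k)))⁻¹) (t₀, τ₀) := by
      apply ContDiffAt.mul
      · exact ((Sl_contDiff ha).comp (by fun_prop : ContDiff ℝ (⊤:ℕ∞)
          (fun p : ℝ × ℝ => (p.1, p.2 + 2 * π * k)))).contDiffAt
      · apply ContDiffAt.inv
        · apply ContDiffAt.mul
          · exact (contDiff_const.mul (ha.comp contDiff_fst)).contDiffAt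
          · apply ContDiffAt.comp
            · exact Ef_contDiff.contDiffAt
            · apply ContDiff.contDiffAt
              have h1 : ContDiff ℝ (⊤:ℕ∞) (fun p : ℝ × ℝ => ((p.1:ℂ) - p.2 - 2*π*k)) := by
                apply ContDiff.sub
                apply ContDiff.sub
                · exact Complex.ofRealCLM.contDiff.comp contDiff_fst
                · exact Complex.ofRealCLM.contDiff.comp contDiff_snd
                · exact contDiff_const
              exact contDiff_const.mul h1
        · simp only
          rw [show Complex.I * ((t₀:ℂ) - τ₀ - 2*π*k) = Complex.I * (((t₀ - τ₀ - 2*π*k : ℝ)):ℂ) by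
            push_cast; ring]
          exact mul_ne_zero (mul_ne_zero Complex.I_ne_zero (hnz t₀)) (Ef_ne_zero hWp)
    apply hF.congr_of_eventuallyEq
    filter_upwards [hmem] with q hq
    exact main k q.1 q.2 hq
  · intro t τ
    constructor
    · by_cases hex : ∃ m : ℤ, t - τ = 2 * π * m
      · obtain ⟨m, hm⟩ := hex
        rw [hdiag t τ ⟨m, hm⟩, hdiag (t + 2*π) τ ⟨m + 1, by push_cast; linarith⟩,
          haper, hdper]
      · have hex' : ¬ ∃ m : ℤ, (t + 2*π) - τ = 2 * π * m := by
          rintro ⟨m, hm⟩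
          exact hex ⟨m - 1, by push_cast; linarith⟩
        rw [hoff t τ hex, hoff (t + 2*π) τ hex', haper]
        congr 2
        rw [show Complex.I * (((t + 2*π : ℝ) : ℂ) - (τ:ℂ)) =
            Complex.I * ((t:ℂ) - τ) + 2*π*Complex.I by
          push_cast; ring, Complex.exp_add, Complex.exp_two_pi_mul_I, mul_one]
    · by_cases hex : ∃ m : ℤ, t - τ = 2 * π * m
      · obtain ⟨m, hm⟩ := hex
        rw [hdiag t τ ⟨m, hm⟩, hdiag t (τ + 2*π) ⟨m - 1, by push_cast; linarith⟩]
      · have hex' : ¬ ∃ m : ℤ, t - (τ + 2*π) = 2 * π * m := by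
          rintro ⟨m, hm⟩
          exact hex ⟨m + 1, by push_cast; linarith⟩
        rw [hoff t τ hex, hoff t (τ + 2*π) hex', haper]
        congr 2
        rw [show Complex.I * ((t:ℂ) - ((τ + 2*π : ℝ) : ℂ)) =
            Complex.I * ((t:ℂ) - τ) + (-1:ℤ)*(2*π*Complex.I) by
          push_cast; ring, Complex.exp_add, Complex.exp_int_mul_two_pi_mul_I, mul_one]
end
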